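/- Let α > −1/2 and c > 0. For every n ∈ ℕ and every x > 0 one has |j^α_{n,c}(x)| ≤ √(2(2n+α+1)) · (cx/2)^{2n+α+1} / (√x · Γ(2n+α+2)). Consequently, for every R > 0 there exists a constant C > 0 such that sup_{0 < x ≤ R} |j^α_{n,c}(x)| ≤ C n^{−2} for all n ≥ 1. -/

import Mathlib

open MeasureTheory Real

/-- The Bessel function of the first kind `J_ν`, defined for `x > 0` by its power series
`J_ν(x) = Σ_{m=0}^∞ (−1)^m (x/2)^{2m+ν} / (m! Γ(m+ν+1))`, where `1/Γ` vanishes at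
nonpositive integers (as does Mathlib's `Real.Gamma`). -/
noncomputable def besselJ (ν : ℝ) (x : ℝ) : ℝ :=
  ∑' m : ℕ, (-1 : ℝ) ^ m * (x / 2) ^ (2 * (m : ℝ) + ν) /
    ((m.factorial : ℝ) * Real.Gamma ((m : ℝ) + ν + 1))

/-- The Hankel spherical Bessel function
`j^α_{n,c}(x) = √(2(2n+α+1)) · J_{2n+α+1}(cx) / √x` for `x > 0`. -/
noncomputable def hankelSphBesselJ (α c : ℝ) (n : ℕ) (x : ℝ) : ℝ :=
  Real.sqrt (2 * (2 * (n : ℝ) + α + 1)) * besselJ (2 * (n : ℝ) + α + 1) (c * x) / Real.sqrt x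

/-!
Write `J_ν(x) = (x/2)^ν F_{ν+1}((x/2)²)` with `F_b(t) = ∑ (-t)^m / (m! Γ(m+b))` (`besselSeries`).
Termwise, `F_b' = -F_{b+1}` and `F_b = b F_{b+1} - t F_{b+2}`, so the energy
`F_b(t)² + t F_{b+1}(t)²` has derivative `(1 - 2b) F_{b+1}(t)²`. For `b ≥ 1/2` it decreases,
whence `|F_b(t)| ≤ F_b(0) = 1/Γ(b)` for `t ≥ 0`: this is the pointwise bound.
For `ν ≥ 1/2` that bound increases in `x`, so on `(0, R]` it is at most its value at `x = R`, where
`Γ(2n+α+2) ≥ Γ(α+2) (2n)!` makes it decay faster than any power of `n`.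
-/

theorem hasDerivAt_tsum_mul_pow {a : ℕ → ℝ}
    (ha : ∀ r, Summable fun m : ℕ ↦ ((m : ℝ) + 1) * a (m + 1) * r ^ m) (t : ℝ) :
    HasDerivAt (fun s ↦ ∑' m, a m * s ^ m) (∑' m : ℕ, ((m : ℝ) + 1) * a (m + 1) * t ^ m) t := by
  set R := |t| + 1
  have hR : 0 < R := by positivity
  set u : ℕ → ℝ := fun n ↦ |n * a n| * R ^ (n - 1)
  have hu : Summable u :=
    (summable_nat_add_iff 1).mp <| (ha R).abs.congr fun m ↦ by
      simp [u, abs_mul, abs_pow, abs_of_pos hR, abs_of_pos (Nat.cast_add_one_pos (α := ℝ) m)]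
  have hbound : ∀ n y, y ∈ Metric.ball (0 : ℝ) R → ‖a n * (n * y ^ (n - 1))‖ ≤ u n := by
    intro n y hy
    rw [mem_ball_zero_iff, Real.norm_eq_abs] at hy
    calc ‖a n * (n * y ^ (n - 1))‖ = |n * a n| * |y| ^ (n - 1) := by
          simp only [norm_mul, norm_pow, Real.norm_eq_abs, abs_mul, Nat.abs_cast]; ring
      _ ≤ |n * a n| * R ^ (n - 1) := by gcongr
  have htR : t ∈ Metric.ball (0 : ℝ) R := by simp [R]
  have hsum : Summable fun n ↦ a n * (n * t ^ (n - 1)) :=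
    .of_norm_bounded hu fun n ↦ hbound n t htR
  have hshift :
      ∑' n : ℕ, a n * (n * t ^ (n - 1)) = ∑' m : ℕ, ((m : ℝ) + 1) * a (m + 1) * t ^ m := by
    rw [hsum.tsum_eq_zero_add, Nat.cast_zero, zero_mul, mul_zero, zero_add]
    exact tsum_congr fun m ↦ by push_cast; ring
  rw [← hshift]
  exact hasDerivAt_tsum_of_isPreconnected hu Metric.isOpen_ball
    (convex_ball (0 : ℝ) R).isPreconnected (fun n y _ ↦ (hasDerivAt_pow n y).const_mul (a n))
    hbound (Metric.mem_ball_self hR) ((summable_nat_add_iff 1).mp (by simp [summable_zero])) htR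

noncomputable def besselCoeff (b : ℝ) (m : ℕ) : ℝ :=
  (-1) ^ m / ((m.factorial : ℝ) * Gamma (m + b))

noncomputable def besselSeries (b t : ℝ) : ℝ :=
  ∑' m, besselCoeff b m * t ^ m

theorem besselCoeff_zero (b : ℝ) : besselCoeff b 0 = (Gamma b)⁻¹ := by
  simp [besselCoeff]

theorem besselCoeff_succ {b : ℝ} {m : ℕ} (hmb : 0 < (m : ℝ) + b) :
    besselCoeff b (m + 1) = -besselCoeff b m / ((m + 1) * (m + b)) := by
  have hΓ : Gamma (m + 1 + b) = (m + b) * Gamma (m + b) := by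
    rw [add_right_comm, Gamma_add_one hmb.ne']
  rw [besselCoeff, besselCoeff, Nat.factorial_succ, Nat.cast_mul, Nat.cast_succ,
    hΓ, pow_succ]
  have : 0 < ((m : ℝ) + 1) := Nat.cast_add_one_pos m
  have : 0 < Gamma (m + b) := Gamma_pos_of_pos hmb
  field_simp

theorem succ_mul_besselCoeff_succ (b : ℝ) (m : ℕ) :
    ((m : ℝ) + 1) * besselCoeff b (m + 1) = -besselCoeff (b + 1) m := by
  rw [besselCoeff, besselCoeff, Nat.factorial_succ, Nat.cast_mul, Nat.cast_succ,
    add_right_comm, add_assoc (m : ℝ), pow_succ]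
  have : ((m : ℝ) + 1) ≠ 0 := (Nat.cast_add_one_pos m).ne'
  field_simp

theorem besselCoeff_contiguous {b : ℝ} (hb : 0 < b) (m : ℕ) :
    besselCoeff b (m + 1) = b * besselCoeff (b + 1) (m + 1) - besselCoeff (b + 2) m := by
  have hmb : (m : ℝ) + 1 + b ≠ 0 := by positivity
  have hΓ : Gamma (m + 1 + (b + 1)) = (m + 1 + b) * Gamma (m + 1 + b) := by
    rw [← add_assoc, Gamma_add_one hmb]
  have hΓ' : Gamma (m + (b + 2)) = Gamma (m + 1 + (b + 1)) := by ring_nf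
  rw [besselCoeff, besselCoeff, besselCoeff, Nat.factorial_succ, Nat.cast_mul,
    Nat.cast_succ, hΓ', hΓ, pow_succ]
  have : 0 < Gamma (m + 1 + b) := Gamma_pos_of_pos (by positivity)
  field_simp
  ring

theorem summable_besselCoeff_mul_pow (b r : ℝ) :
    Summable fun m ↦ besselCoeff b m * r ^ m := by
  refine summable_of_ratio_norm_eventually_le (r := 1 / 2) (by norm_num) ?_
  filter_upwards [tendsto_natCast_atTop_atTop.eventually_ge_atTop (max (2 * |r|) (1 - b))]
    with m hm
  have hmb : 1 ≤ (m : ℝ) + b := by linarith [le_max_right (2 * |r|) (1 - b)]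
  have hmr : 2 * |r| ≤ ((m : ℝ) + 1) * (m + b) := by
    nlinarith [le_max_left (2 * |r|) (1 - b)]
  rw [besselCoeff_succ (by linarith), norm_mul, norm_mul, norm_div, norm_neg, norm_pow,
    norm_pow, pow_succ, Real.norm_eq_abs, Real.norm_eq_abs, Real.norm_eq_abs]
  have hpos : 0 < ((m : ℝ) + 1) * (m + b) := by positivity
  rw [abs_of_pos hpos, div_mul_eq_mul_div, div_le_iff₀ hpos]
  calc |besselCoeff b m| * (|r| ^ m * |r|) = |besselCoeff b m| * |r| ^ m * |r| := by ring
    _ ≤ |besselCoeff b m| * |r| ^ m * (1 / 2 * (((m : ℝ) + 1) * (m + b))) := by gcongr; linarith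
    _ = _ := by ring

theorem besselSeries_zero (b : ℝ) : besselSeries b 0 = (Gamma b)⁻¹ := by
  rw [besselSeries, tsum_eq_single 0 fun m hm ↦ by rw [zero_pow hm, mul_zero], pow_zero,
    mul_one, besselCoeff_zero]

theorem hasDerivAt_besselSeries (b t : ℝ) :
    HasDerivAt (besselSeries b) (-besselSeries (b + 1) t) t := by
  have h := hasDerivAt_tsum_mul_pow (a := besselCoeff b) (fun r ↦ by
    simpa only [succ_mul_besselCoeff_succ, neg_mul] using
      (summable_besselCoeff_mul_pow (b + 1) r).neg) t
  simp only [succ_mul_besselCoeff_succ, neg_mul, tsum_neg] at h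
  exact h

theorem besselSeries_contiguous {b : ℝ} (hb : 0 < b) (t : ℝ) :
    besselSeries b t = b * besselSeries (b + 1) t - t * besselSeries (b + 2) t := by
  have hshift : ∀ b', besselSeries b' t =
      besselCoeff b' 0 + ∑' m, besselCoeff b' (m + 1) * t ^ (m + 1) := fun b' ↦ by
    rw [besselSeries, (summable_besselCoeff_mul_pow b' t).tsum_eq_zero_add, pow_zero, mul_one]
  have hb₀ : besselCoeff b 0 = b * besselCoeff (b + 1) 0 := by
    rw [besselCoeff_zero, besselCoeff_zero, Gamma_add_one hb.ne']
    field_simp [(Gamma_pos_of_pos hb).ne']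
  have htail : ∑' m, besselCoeff b (m + 1) * t ^ (m + 1) =
      b * ∑' m, besselCoeff (b + 1) (m + 1) * t ^ (m + 1) -
        t * ∑' m, besselCoeff (b + 2) m * t ^ m := by
    rw [← tsum_mul_left, ← tsum_mul_left, ← Summable.tsum_sub
      (((summable_nat_add_iff 1).mpr (summable_besselCoeff_mul_pow (b + 1) t)).mul_left b)
      ((summable_besselCoeff_mul_pow (b + 2) t).mul_left t)]
    exact tsum_congr fun m ↦ by rw [besselCoeff_contiguous hb]; ring
  rw [hshift b, hshift (b + 1), hb₀, htail, besselSeries]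
  ring

theorem abs_besselSeries_le {b t : ℝ} (hb : 1 / 2 ≤ b) (ht : 0 ≤ t) :
    |besselSeries b t| ≤ (Gamma b)⁻¹ := by
  set E : ℝ → ℝ := fun s ↦ besselSeries b s ^ 2 + s * besselSeries (b + 1) s ^ 2
  have hE : ∀ s, HasDerivAt E ((1 - 2 * b) * besselSeries (b + 1) s ^ 2) s := fun s ↦ by
    refine (((hasDerivAt_besselSeries b s).pow 2).add
      ((hasDerivAt_id s).mul ((hasDerivAt_besselSeries (b + 1) s).pow 2))).congr_deriv ?_
    rw [besselSeries_contiguous (by linarith) s, add_assoc b 1 1, one_add_one_eq_two]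
    simp only [id, Pi.pow_apply]
    ring
  have hmono : E t ≤ E 0 :=
    antitone_of_hasDerivAt_nonpos hE (fun s ↦ mul_nonpos_of_nonpos_of_nonneg
      (by linarith) (sq_nonneg _)) ht
  have hE0 : E 0 = (Gamma b)⁻¹ ^ 2 := by simp [E, besselSeries_zero]
  have hsq : besselSeries b t ^ 2 ≤ (Gamma b)⁻¹ ^ 2 := by
    rw [hE0] at hmono
    linarith [mul_nonneg ht (sq_nonneg (besselSeries (b + 1) t))]
  exact abs_le_of_sq_le_sq hsq (inv_nonneg.mpr (Gamma_pos_of_pos (by linarith)).le)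

theorem besselJ_eq_rpow_mul_besselSeries (ν : ℝ) {x : ℝ} (hx : 0 < x) :
    besselJ ν x = (x / 2) ^ ν * besselSeries (ν + 1) ((x / 2) ^ 2) := by
  rw [besselJ, besselSeries, ← tsum_mul_left]
  refine tsum_congr fun m ↦ ?_
  rw [besselCoeff, rpow_add (by positivity), ← add_assoc,
    show 2 * (m : ℝ) = (2 * m : ℕ) by push_cast; ring, rpow_natCast, pow_mul]
  ring

theorem abs_besselJ_le {ν x : ℝ} (hν : -(1 / 2) ≤ ν) (hx : 0 < x) :
    |besselJ ν x| ≤ (x / 2) ^ ν / Gamma (ν + 1) := by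
  rw [besselJ_eq_rpow_mul_besselSeries ν hx, abs_mul, abs_of_pos (by positivity), div_eq_mul_inv]
  exact mul_le_mul_of_nonneg_left (abs_besselSeries_le (by linarith) (sq_nonneg _))
    (by positivity)

theorem abs_hankelSphBesselJ_le {α c : ℝ} (hα : -(3 / 2) ≤ α) (hc : 0 < c) (n : ℕ) {x : ℝ}
    (hx : 0 < x) :
    |hankelSphBesselJ α c n x| ≤
      √(2 * (2 * (n : ℝ) + α + 1)) * (c * x / 2) ^ (2 * (n : ℝ) + α + 1) /
        (√x * Gamma (2 * (n : ℝ) + α + 2)) := by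
  have hJ := abs_besselJ_le (ν := 2 * (n : ℝ) + α + 1)
    (by linarith [n.cast_nonneg (α := ℝ)]) (mul_pos hc hx)
  rw [add_assoc _ (1 : ℝ), one_add_one_eq_two] at hJ
  rw [hankelSphBesselJ, abs_div, abs_mul, abs_of_nonneg (sqrt_nonneg _),
    abs_of_nonneg (sqrt_nonneg _)]
  calc √(2 * (2 * (n : ℝ) + α + 1)) * |besselJ (2 * n + α + 1) (c * x)| / √x
      ≤ √(2 * (2 * (n : ℝ) + α + 1)) *
          ((c * x / 2) ^ (2 * (n : ℝ) + α + 1) / Gamma (2 * n + α + 2)) / √x := by gcongr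
    _ = _ := by ring

theorem Gamma_mul_factorial_le_Gamma_add_nat {s : ℝ} (hs : 1 ≤ s) :
    ∀ m : ℕ, Gamma s * m.factorial ≤ Gamma (s + m)
  | 0 => by simp
  | m + 1 => by
    have ih := Gamma_mul_factorial_le_Gamma_add_nat hs m
    rw [Nat.factorial_succ, Nat.cast_mul, Nat.cast_succ, ← add_assoc,
      Gamma_add_one (by positivity)]
    calc Gamma s * ((m + 1) * m.factorial) = (m + 1) * (Gamma s * m.factorial) := by ring
      _ ≤ (s + m) * Gamma (s + m) := mul_le_mul (by linarith) ih (by positivity) (by positivity)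
      _ = _ := rfl

theorem natCast_pow_mul_pow_div_factorial_le_exp (k n : ℕ) {y : ℝ} (hy : 0 ≤ y) :
    (n : ℝ) ^ k * y ^ n / n.factorial ≤ exp (2 ^ k * y) := by
  have hn : (n : ℝ) ^ k ≤ (2 ^ k) ^ n := by
    rw [← pow_mul, mul_comm, pow_mul]
    gcongr
    exact_mod_cast Nat.lt_two_pow_self.le
  calc (n : ℝ) ^ k * y ^ n / n.factorial ≤ (2 ^ k) ^ n * y ^ n / n.factorial := by gcongr
    _ = (2 ^ k * y) ^ n / n.factorial := by rw [mul_pow]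
    _ ≤ exp (2 ^ k * y) := pow_div_factorial_le_exp _ (by positivity) n

theorem rpow_div_sqrt_le_of_le {c ν x R : ℝ} (hc : 0 ≤ c) (hν : 1 / 2 ≤ ν) (hx : 0 < x)
    (hxR : x ≤ R) : (c * x / 2) ^ ν / √x ≤ (c * R / 2) ^ ν / √R := by
  have key : ∀ z, 0 < z → (c * z / 2) ^ ν / √z = (c / 2) ^ ν * z ^ (ν - 1 / 2) := fun z hz ↦ by
    rw [mul_div_right_comm, mul_rpow (by positivity) hz.le, sqrt_eq_rpow, mul_div_assoc,
      rpow_sub hz]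
  rw [key x hx, key R (hx.trans_le hxR)]
  gcongr

theorem sqrt_mul_rpow_div_Gamma_le {α y : ℝ} (hα : -1 ≤ α) (hy : 0 < y) {n : ℕ} (hn : 1 ≤ n) :
    √(2 * (2 * (n : ℝ) + α + 1)) * y ^ (2 * (n : ℝ) + α + 1) / Gamma (2 * (n : ℝ) + α + 2) ≤
      (2 * α + 6) * y ^ (α + 1) * exp (8 * y) / Gamma (α + 2) / (n : ℝ) ^ 2 := by
  have hn' : (1 : ℝ) ≤ n := by exact_mod_cast hn
  have hα6 : 0 < 2 * α + 6 := by linarith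
  have hsqrt : √(2 * (2 * (n : ℝ) + α + 1)) ≤ (2 * α + 6) * n :=
    (sqrt_le_self_iff.mpr (.inr (by linarith))).trans (by nlinarith)
  have hpow : y ^ (2 * (n : ℝ) + α + 1) = y ^ (α + 1) * y ^ (2 * n) := by
    rw [show 2 * (n : ℝ) + α + 1 = (α + 1) + (2 * n : ℕ) by push_cast; ring, rpow_add hy,
      rpow_natCast]
  have hΓ : Gamma (α + 2) * (2 * n).factorial ≤ Gamma (2 * (n : ℝ) + α + 2) := by
    have h := Gamma_mul_factorial_le_Gamma_add_nat (s := α + 2) (by linarith) (2 * n)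
    rwa [show α + 2 + ((2 * n : ℕ) : ℝ) = 2 * n + α + 2 by push_cast; ring] at h
  have hexp : (n : ℝ) ^ 3 * y ^ (2 * n) / (2 * n).factorial ≤ exp (8 * y) :=
    calc (n : ℝ) ^ 3 * y ^ (2 * n) / (2 * n).factorial
        ≤ ((2 * n : ℕ) : ℝ) ^ 3 * y ^ (2 * n) / (2 * n).factorial := by
          gcongr; linarith
      _ ≤ exp (2 ^ 3 * y) := natCast_pow_mul_pow_div_factorial_le_exp 3 (2 * n) hy.le
      _ = exp (8 * y) := by norm_num
  have hΓα : 0 < Gamma (α + 2) := Gamma_pos_of_pos (by linarith)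
  calc √(2 * (2 * (n : ℝ) + α + 1)) * y ^ (2 * (n : ℝ) + α + 1) / Gamma (2 * (n : ℝ) + α + 2)
      ≤ (2 * α + 6) * n * (y ^ (α + 1) * y ^ (2 * n)) / (Gamma (α + 2) * (2 * n).factorial) := by
        rw [hpow]; gcongr
    _ = (2 * α + 6) * y ^ (α + 1) / Gamma (α + 2) *
          ((n : ℝ) ^ 3 * y ^ (2 * n) / (2 * n).factorial) / (n : ℝ) ^ 2 := by
        field_simp
    _ ≤ (2 * α + 6) * y ^ (α + 1) / Gamma (α + 2) * exp (8 * y) / (n : ℝ) ^ 2 := by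
        gcongr
    _ = _ := by ring

theorem sqrt_mul_rpow_div_sqrt_mul_Gamma_le {α c x R : ℝ} (hα : -1 ≤ α) (hc : 0 < c)
    (hx : 0 < x) (hxR : x ≤ R) {n : ℕ} (hn : 1 ≤ n) :
    √(2 * (2 * (n : ℝ) + α + 1)) * (c * x / 2) ^ (2 * (n : ℝ) + α + 1) /
        (√x * Gamma (2 * (n : ℝ) + α + 2)) ≤
      (2 * α + 6) * (c * R / 2) ^ (α + 1) * exp (8 * (c * R / 2)) / Gamma (α + 2) / √R /
        (n : ℝ) ^ 2 := by
  have hν : 1 / 2 ≤ 2 * (n : ℝ) + α + 1 := by linarith [(Nat.one_le_cast (α := ℝ)).mpr hn]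
  have hΓ : 0 < Gamma (2 * (n : ℝ) + α + 2) := Gamma_pos_of_pos (by linarith)
  have hmono := rpow_div_sqrt_le_of_le hc.le hν hx hxR
  calc √(2 * (2 * (n : ℝ) + α + 1)) * (c * x / 2) ^ (2 * (n : ℝ) + α + 1) /
        (√x * Gamma (2 * (n : ℝ) + α + 2))
      = √(2 * (2 * (n : ℝ) + α + 1)) * ((c * x / 2) ^ (2 * (n : ℝ) + α + 1) / √x) /
          Gamma (2 * (n : ℝ) + α + 2) := by ring
    _ ≤ √(2 * (2 * (n : ℝ) + α + 1)) * ((c * R / 2) ^ (2 * (n : ℝ) + α + 1) / √R) /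
          Gamma (2 * (n : ℝ) + α + 2) := by gcongr
    _ = √(2 * (2 * (n : ℝ) + α + 1)) * (c * R / 2) ^ (2 * (n : ℝ) + α + 1) /
          Gamma (2 * (n : ℝ) + α + 2) / √R := by ring
    _ ≤ _ := by
        rw [div_right_comm _ (√R)]
        exact div_le_div_of_nonneg_right
          (sqrt_mul_rpow_div_Gamma_le hα (by linarith [mul_pos hc (hx.trans_le hxR)]) hn)
          (sqrt_nonneg R)

/-- For `α > −1/2`, `c > 0`:
`|j^α_{n,c}(x)| ≤ √(2(2n+α+1)) (cx/2)^{2n+α+1} / (√x Γ(2n+α+2))` for all `n` and `x > 0`;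
consequently, for every `R > 0` there is `C > 0` with
`sup_{0 < x ≤ R} |j^α_{n,c}(x)| ≤ C n^{−2}` for all `n ≥ 1`. -/
theorem hankelSphBesselJ_pointwise_bound (α c : ℝ) (hα : -(1 / 2 : ℝ) < α) (hc : 0 < c) :
    (∀ (n : ℕ) (x : ℝ), 0 < x →
      |hankelSphBesselJ α c n x| ≤
        Real.sqrt (2 * (2 * (n : ℝ) + α + 1)) * (c * x / 2) ^ (2 * (n : ℝ) + α + 1) /
          (Real.sqrt x * Real.Gamma (2 * (n : ℝ) + α + 2))) ∧
    ∀ R > (0 : ℝ), ∃ C > 0, ∀ n : ℕ, 1 ≤ n → ∀ x : ℝ, 0 < x → x ≤ R →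
      |hankelSphBesselJ α c n x| ≤ C / (n : ℝ) ^ 2 := by
  have hpointwise := fun n x (hx : 0 < x) ↦
    abs_hankelSphBesselJ_le (α := α) (by linarith) hc n hx
  refine ⟨hpointwise, fun R hR ↦ ⟨_, ?_, fun n hn x hx hxR ↦ (hpointwise n x hx).trans
    (sqrt_mul_rpow_div_sqrt_mul_Gamma_le (by linarith) hc hx hxR hn)⟩⟩
  have : 0 < 2 * α + 6 := by linarith
  have : 0 < Gamma (α + 2) := Gamma_pos_of_pos (by linarith)
  positivity
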